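/- Let M and N be positive integers and let (x_n)_{1 ≤ n ≤ N} be real numbers with ‖x_n‖ ≥ 1/M for all 1 ≤ n ≤ N. Then Σ_{m ≤ M} |Σ_{n ≤ N} e(m·x_n)| > N/6. -/

import Mathlib

set_option maxHeartbeats 1600000

open Finset Real

noncomputable section

/-- Distance from `x` to the nearest integer. -/
def nearestIntDist (x : ℝ) : ℝ := |x - round x|

/-- `e(x) = e^{2πix}`. -/
def eExp (x : ℝ) : ℂ := Complex.exp (2 * (Real.pi : ℂ) * Complex.I * (x : ℂ))

private lemma two_sin_mul_cos (a b : ℝ) :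
    2 * Real.sin a * Real.cos b = Real.sin (b + a) - Real.sin (b - a) := by
  rw [Real.sin_add, Real.sin_sub]; ring

private lemma two_sin_mul_sin (a b : ℝ) :
    2 * Real.sin a * Real.sin b = Real.cos (b - a) - Real.cos (b + a) := by
  rw [Real.cos_add, Real.cos_sub]; ring

private lemma sin_sq_sub_sin_sq (A B : ℝ) :
    Real.sin (A + B) * Real.sin (A - B) = Real.sin A ^ 2 - Real.sin B ^ 2 := by
  rw [Real.sin_add, Real.sin_sub]
  nlinarith [Real.sin_sq_add_cos_sq A, Real.sin_sq_add_cos_sq B]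

private lemma sum_cos_eq (M : ℕ) (y : ℝ) :
    2 * Real.sin (π * y) * ∑ m ∈ Icc 1 M, Real.cos (2 * π * m * y)
      = Real.sin ((2 * M + 1) * π * y) - Real.sin (π * y) := by
  induction M with
  | zero => simp
  | succ M ih =>
    rw [Finset.sum_Icc_succ_top (by omega : 1 ≤ M + 1), mul_add, ih]
    have h : 2 * Real.sin (π * y) * Real.cos (2 * π * (↑(M + 1)) * y)
        = Real.sin ((2 * (↑(M + 1) : ℝ)) * π * y + π * y)
          - Real.sin ((2 * (↑(M + 1) : ℝ)) * π * y - π * y) := by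
      rw [two_sin_mul_cos]; push_cast; ring_nf
    push_cast
    push_cast at h
    rw [h]
    ring_nf

private lemma sum_sin_eq (M : ℕ) (y : ℝ) :
    2 * Real.sin (π * y) * ∑ m ∈ Icc 1 M, Real.sin (2 * π * m * y)
      = Real.cos (π * y) - Real.cos ((2 * M + 1) * π * y) := by
  induction M with
  | zero => simp
  | succ M ih =>
    rw [Finset.sum_Icc_succ_top (by omega : 1 ≤ M + 1), mul_add, ih]
    have h : 2 * Real.sin (π * y) * Real.sin (2 * π * (↑(M + 1)) * y)
        = Real.cos ((2 * (↑(M + 1) : ℝ)) * π * y - π * y)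
          - Real.cos ((2 * (↑(M + 1) : ℝ)) * π * y + π * y) := by
      rw [two_sin_mul_sin]; push_cast; ring_nf
    push_cast
    push_cast at h
    rw [h]
    ring_nf

private lemma sum_fejer (M : ℕ) (y : ℝ) :
    4 * Real.sin (π * y) ^ 2 * ∑ m ∈ Icc 1 M, ((M : ℝ) - m) * Real.cos (2 * π * m * y)
      = 2 * Real.sin (π * M * y) ^ 2 - 2 * M * Real.sin (π * y) ^ 2 := by
  induction M with
  | zero => simp
  | succ M ih =>
    have hsplit : ∑ m ∈ Icc 1 (M + 1), ((↑(M + 1) : ℝ) - m) * Real.cos (2 * π * m * y)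
        = (∑ m ∈ Icc 1 M, ((M : ℝ) - m) * Real.cos (2 * π * m * y))
          + ∑ m ∈ Icc 1 M, Real.cos (2 * π * m * y) := by
      rw [Finset.sum_Icc_succ_top (by omega : 1 ≤ M + 1), ← Finset.sum_add_distrib]
      push_cast
      rw [show ((M : ℝ) + 1 - (↑M + 1)) * Real.cos (2 * π * (↑M + 1) * y) = 0 by ring]
      rw [add_zero]
      exact Finset.sum_congr rfl fun m _ => by ring
    rw [hsplit, mul_add, ih]
    have hc := sum_cos_eq M y
    have key : Real.sin (π * (↑(M + 1) : ℝ) * y) ^ 2 - Real.sin (π * M * y) ^ 2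
        = Real.sin (π * y) * Real.sin ((2 * M + 1) * π * y) := by
      have h2 := sin_sq_sub_sin_sq (π * (M : ℝ) * y + π * y) (π * (M : ℝ) * y)
      rw [show π * (M : ℝ) * y + π * y + π * (M : ℝ) * y = (2 * (M : ℝ) + 1) * π * y by ring,
          show π * (M : ℝ) * y + π * y - π * (M : ℝ) * y = π * y by ring] at h2
      push_cast
      rw [show π * ((M : ℝ) + 1) * y = π * (M : ℝ) * y + π * y by ring]
      push_cast at h2
      linarith [h2]
    have h4 : 4 * Real.sin (π * y) ^ 2 * ∑ m ∈ Icc 1 M, Real.cos (2 * π * m * y)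
        = 2 * Real.sin (π * y) * (Real.sin ((2 * M + 1) * π * y) - Real.sin (π * y)) := by
      rw [← hc]; ring
    rw [h4]
    push_cast
    push_cast at key
    nlinarith [key]

private lemma poly_ineq (u : ℝ) (h0 : 0 ≤ u) (h1 : u ≤ 0.156) :
    3 * (1 + (3 - 4 * (u * (1 - u / 4) ^ 2)) ^ 2)
      ≤ 10 * (1 - u / 4) * (1 - u / 2) * (3 - 4 * u) := by
  have key : 10 * (1 - u / 4) * (1 - u / 2) * (3 - 4 * u)
      - 3 * (1 + (3 - 4 * (u * (1 - u / 4) ^ 2)) ^ 2)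
      = u * (9.5 - 50.25 * u) + u ^ 3 * (47.5 - 18 * u) + u ^ 5 * (3 - 0.1875 * u) := by
    ring
  have t1 : 0 ≤ u * (9.5 - 50.25 * u) := mul_nonneg h0 (by linarith)
  have t2 : 0 ≤ u ^ 3 * (47.5 - 18 * u) := mul_nonneg (by positivity) (by linarith)
  have t3 : 0 ≤ u ^ 5 * (3 - 0.1875 * u) := mul_nonneg (by positivity) (by linarith)
  linarith [key, t1, t2, t3]

private lemma diamond (M : ℕ) (hM : 2 ≤ M) :
    3 * (π / (2 * M)) * (Real.sin (π / (2 * M)) ^ 2 + Real.sin (3 * (π / (2 * M))) ^ 2)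
      ≤ 5 * Real.sin (2 * (π / (2 * M)))
          * (Real.sin (π / (2 * M)) * Real.sin (3 * (π / (2 * M)))) := by
  have hpi : (0:ℝ) < π := Real.pi_pos
  rcases eq_or_lt_of_le hM with h2 | h3
  · -- M = 2
    subst h2
    have e1 : π / (2 * ((2:ℕ):ℝ)) = π / 4 := by norm_num
    rw [e1, show 3 * (π/4) = π - π/4 by ring, Real.sin_pi_sub,
        show 2 * (π/4) = π/2 by ring, Real.sin_pi_div_two, Real.sin_pi_div_four]
    have h2 : Real.sqrt 2 ^ 2 = 2 := Real.sq_sqrt (by norm_num)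
    nlinarith [Real.pi_lt_d2]
  · rcases eq_or_lt_of_le (by omega : 3 ≤ M) with h3' | h4
    · -- M = 3
      subst h3'
      have e1 : π / (2 * ((3:ℕ):ℝ)) = π / 6 := by norm_num
      rw [e1, show 3 * (π/6) = π/2 by ring, show 2 * (π/6) = π/3 by ring,
          Real.sin_pi_div_two, Real.sin_pi_div_six, Real.sin_pi_div_three]
      have hs3 : Real.sqrt 3 ^ 2 = 3 := Real.sq_sqrt (by norm_num)
      have hs3' : (0:ℝ) ≤ Real.sqrt 3 := Real.sqrt_nonneg 3
      have hup : Real.sqrt 3 ≤ 1.74 := by nlinarith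
      have hlo : 1.72 ≤ Real.sqrt 3 := by nlinarith
      nlinarith [Real.pi_lt_d2]
    · -- M ≥ 4
      have hM4 : (4:ℝ) ≤ (M:ℝ) := by exact_mod_cast h4
      set t : ℝ := π / (2 * M) with htdef
      have ht0 : 0 < t := by positivity
      have htle : t ≤ 0.394 := by
        rw [htdef, div_le_iff₀ (by positivity)]
        nlinarith [Real.pi_lt_d2]
      have ht1 : t ≤ 1 := by linarith
      have hu : t ^ 2 ≤ 0.156 := by nlinarith [mul_self_le_mul_self ht0.le htle]
      have hs3t : Real.sin (3 * t) = 3 * Real.sin t - 4 * Real.sin t ^ 3 := Real.sin_three_mul t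
      have hs2t : Real.sin (2 * t) = 2 * Real.sin t * Real.cos t := Real.sin_two_mul t
      set a : ℝ := Real.sin t with hadef
      have ha0 : 0 < a := Real.sin_pos_of_pos_of_lt_pi ht0 (by nlinarith [Real.pi_gt_three])
      have halt : a < t := Real.sin_lt ht0
      have hagt : t - t ^ 3 / 4 < a := by linarith [Real.sin_gt_sub_cube ht0, pow_pos ht0 3]
      have hcos : 1 - t ^ 2 / 2 ≤ Real.cos t := Real.one_sub_sq_div_two_le_cos
      have htpos3 : 0 < t - t ^ 3 / 4 := by nlinarith
      have hσu : a ^ 2 ≤ t ^ 2 := by nlinarith [mul_self_le_mul_self ha0.le halt.le]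
      have hσl : t ^ 2 * (1 - t ^ 2 / 4) ^ 2 ≤ a ^ 2 := by
        nlinarith [mul_self_le_mul_self htpos3.le hagt.le]
      have hcos0 : (0:ℝ) ≤ Real.cos t := by nlinarith
      have key : 3 * t * (1 + (3 - 4 * a ^ 2) ^ 2) ≤ 10 * a * Real.cos t * (3 - 4 * a ^ 2) := by
        have h3a : 0 ≤ 3 - 4 * a ^ 2 := by nlinarith
        have h3τ : 3 - 4 * a ^ 2 ≤ 3 - 4 * (t ^ 2 * (1 - t ^ 2 / 4) ^ 2) := by linarith
        have hL : (3 - 4 * a ^ 2) ^ 2 ≤ (3 - 4 * (t ^ 2 * (1 - t ^ 2 / 4) ^ 2)) ^ 2 :=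
          pow_le_pow_left₀ h3a h3τ 2
        have step0 : 3 * t * (1 + (3 - 4 * a ^ 2) ^ 2)
            ≤ 3 * t * (1 + (3 - 4 * (t ^ 2 * (1 - t ^ 2 / 4) ^ 2)) ^ 2) := by
          have := mul_le_mul_of_nonneg_left hL (by positivity : (0:ℝ) ≤ 3 * t)
          linarith
        have hpolyt := mul_le_mul_of_nonneg_left (poly_ineq (t ^ 2) (by positivity) hu) ht0.le
        have step1 : 3 * t * (1 + (3 - 4 * (t ^ 2 * (1 - t ^ 2 / 4) ^ 2)) ^ 2)
            ≤ 10 * (t - t ^ 3 / 4) * (1 - t ^ 2 / 2) * (3 - 4 * t ^ 2) := by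
          nlinarith [hpolyt]
        have f2 : (0:ℝ) ≤ 1 - t ^ 2 / 2 := by nlinarith
        have f3 : (0:ℝ) ≤ 3 - 4 * t ^ 2 := by nlinarith
        have g3 : 3 - 4 * t ^ 2 ≤ 3 - 4 * a ^ 2 := by linarith
        have s1 : (t - t ^ 3 / 4) * (1 - t ^ 2 / 2) ≤ a * Real.cos t :=
          mul_le_mul hagt.le hcos f2 ha0.le
        have s2 : ((t - t ^ 3 / 4) * (1 - t ^ 2 / 2)) * (3 - 4 * t ^ 2)
            ≤ (a * Real.cos t) * (3 - 4 * a ^ 2) :=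
          mul_le_mul s1 g3 f3 (mul_nonneg ha0.le hcos0)
        have s3 := mul_le_mul_of_nonneg_left s2 (by norm_num : (0:ℝ) ≤ 10)
        linarith [step0, step1, s3]
      have hfin := mul_le_mul_of_nonneg_left key (sq_nonneg a)
      rw [hs3t, hs2t]
      linarith [hfin]

private lemma key_ineq (M : ℕ) (hM : 2 ≤ M) (x : ℝ) (hx1 : 1 / (M : ℝ) ≤ x) (hx2 : x ≤ 1 / 2) :
    3 * π / (2 * (3 * π + 5)) ≤
      ∑ m ∈ Icc 1 M,
        (-(3 * π * (1 - (m : ℝ) / M) * Real.cos (π * m / M) + 5 * Real.sin (π * m / M))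
            / (3 * π + 5)) * Real.cos (2 * π * m * x) := by
  have hMr : (2 : ℝ) ≤ (M : ℝ) := by exact_mod_cast hM
  have hM0 : (0 : ℝ) < M := by linarith
  have hMne : (M : ℝ) ≠ 0 := ne_of_gt hM0
  have hpi : (0:ℝ) < π := Real.pi_pos
  have hden : (0:ℝ) < 3 * π + 5 := by positivity
  have hxpos : 0 < x := lt_of_lt_of_le (by positivity) hx1
  set s : ℝ := 1 / (2 * (M:ℝ)) with hs
  have hspos : 0 < s := by positivity
  have hsle : s ≤ 1/4 := by
    rw [hs, div_le_div_iff₀ (by positivity) (by norm_num)]; linarith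
  have hxs : 2 * s ≤ x := by
    have h2s : 2 * s = 1 / M := by rw [hs]; field_simp
    rw [h2s]; exact hx1
  set y₁ : ℝ := x + s with hy₁
  set y₂ : ℝ := x - s with hy₂
  have hy₁pos : 0 < y₁ := by simp only [hy₁]; linarith
  have hy₁lt : y₁ < 1 := by simp only [hy₁]; linarith
  have hy₂pos : 0 < y₂ := by simp only [hy₂]; linarith
  have hy₂lt : y₂ < 1 := by simp only [hy₂]; linarith
  set p₁ : ℝ := Real.sin (π * y₁) with hp₁def
  set p₂ : ℝ := Real.sin (π * y₂) with hp₂def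
  have hp₁ : 0 < p₁ := Real.sin_pos_of_pos_of_lt_pi (mul_pos hpi hy₁pos)
    (by nlinarith [mul_lt_mul_of_pos_left hy₁lt hpi])
  have hp₂ : 0 < p₂ := Real.sin_pos_of_pos_of_lt_pi (mul_pos hpi hy₂pos)
    (by nlinarith [mul_lt_mul_of_pos_left hy₂lt hpi])
  set c : ℝ := Real.cos (π * M * x) with hcdef
  have hsummand : ∀ m ∈ Icc 1 M,
      (-(3 * π * (1 - (m : ℝ) / M) * Real.cos (π * m / M) + 5 * Real.sin (π * m / M))
          / (3 * π + 5)) * Real.cos (2 * π * m * x)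
      = (-(1 / (3 * π + 5))) * ((3 * π / (2 * M)) * (((M:ℝ) - m) * Real.cos (2 * π * m * y₁)
          + ((M:ℝ) - m) * Real.cos (2 * π * m * y₂))
        + (5 / 2) * (Real.sin (2 * π * m * y₁) - Real.sin (2 * π * m * y₂))) := by
    intro m hm
    have h1 : 2 * π * m * y₁ = 2 * π * m * x + π * m / M := by
      simp only [hy₁, hs]; field_simp
    have h2 : 2 * π * m * y₂ = 2 * π * m * x - π * m / M := by
      simp only [hy₂, hs]; field_simp
    rw [h1, h2, Real.cos_add, Real.cos_sub, Real.sin_add, Real.sin_sub]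
    field_simp
    ring
  rw [Finset.sum_congr rfl hsummand, ← Finset.mul_sum]
  have hsplit : ∑ m ∈ Icc 1 M, ((3 * π / (2 * M)) * (((M:ℝ) - m) * Real.cos (2 * π * m * y₁)
          + ((M:ℝ) - m) * Real.cos (2 * π * m * y₂))
        + (5 / 2) * (Real.sin (2 * π * m * y₁) - Real.sin (2 * π * m * y₂)))
      = (3 * π / (2 * M)) * ((∑ m ∈ Icc 1 M, ((M:ℝ) - m) * Real.cos (2 * π * m * y₁))
          + (∑ m ∈ Icc 1 M, ((M:ℝ) - m) * Real.cos (2 * π * m * y₂)))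
        + (5 / 2) * ((∑ m ∈ Icc 1 M, Real.sin (2 * π * m * y₁))
          - (∑ m ∈ Icc 1 M, Real.sin (2 * π * m * y₂))) := by
    rw [Finset.sum_add_distrib, ← Finset.mul_sum, ← Finset.mul_sum, Finset.sum_add_distrib,
        Finset.sum_sub_distrib]
  rw [hsplit]
  have hMy₁ : π * (M:ℝ) * y₁ = π * M * x + π / 2 := by
    simp only [hy₁, hs]; field_simp
  have hMy₂ : π * (M:ℝ) * y₂ = π * M * x - π / 2 := by
    simp only [hy₂, hs]; field_simp
  have hE₁ : ∑ m ∈ Icc 1 M, ((M:ℝ) - m) * Real.cos (2 * π * m * y₁)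
      = (2 * c ^ 2 - 2 * M * p₁ ^ 2) / (4 * p₁ ^ 2) := by
    have h := sum_fejer M y₁
    rw [hMy₁, Real.sin_add_pi_div_two] at h
    rw [eq_div_iff (by positivity)]
    rw [← hcdef, ← hp₁def] at h
    linarith [h]
  have hE₂ : ∑ m ∈ Icc 1 M, ((M:ℝ) - m) * Real.cos (2 * π * m * y₂)
      = (2 * c ^ 2 - 2 * M * p₂ ^ 2) / (4 * p₂ ^ 2) := by
    have h := sum_fejer M y₂
    rw [hMy₂, Real.sin_sub_pi_div_two] at h
    rw [eq_div_iff (by positivity)]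
    rw [← hcdef, ← hp₂def] at h
    nlinarith [h]
  have hS₁ : ∑ m ∈ Icc 1 M, Real.sin (2 * π * m * y₁)
      = c * Real.cos (π * M * x + π * y₁) / p₁ := by
    have h := sum_sin_eq M y₁
    have harg : (2 * (M:ℝ) + 1) * π * y₁ = π * M * x + π * y₁ + π * M * x + π := by
      rw [show (2 * (M:ℝ) + 1) * π * y₁ = 2 * (π * (M:ℝ) * y₁) + π * y₁ by ring, hMy₁]; ring
    rw [harg] at h
    rw [show π * M * x + π * y₁ + π * M * x + π = (π * M * x + π * y₁ + π * M * x) + π by ring,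
        Real.cos_add_pi] at h
    have hnum : Real.cos (π * y₁) + Real.cos (π * M * x + π * y₁ + π * M * x)
        = 2 * c * Real.cos (π * M * x + π * y₁) := by
      rw [show π * M * x + π * y₁ + π * M * x = (π * M * x + π * y₁) + π * M * x by ring,
          Real.cos_add,
          show π * y₁ = (π * M * x + π * y₁) - π * M * x by ring,
          Real.cos_sub, ← hcdef]
      ring
    rw [eq_div_iff (ne_of_gt hp₁)]
    rw [← hp₁def] at h
    linarith [h, hnum]
  have hS₂ : ∑ m ∈ Icc 1 M, Real.sin (2 * π * m * y₂)
      = c * Real.cos (π * M * x + π * y₂) / p₂ := by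
    have h := sum_sin_eq M y₂
    have harg : (2 * (M:ℝ) + 1) * π * y₂ = π * M * x + π * y₂ + π * M * x - π := by
      rw [show (2 * (M:ℝ) + 1) * π * y₂ = 2 * (π * (M:ℝ) * y₂) + π * y₂ by ring, hMy₂]; ring
    rw [harg] at h
    rw [show π * M * x + π * y₂ + π * M * x - π = (π * M * x + π * y₂ + π * M * x) - π by ring,
        Real.cos_sub_pi] at h
    have hnum : Real.cos (π * y₂) + Real.cos (π * M * x + π * y₂ + π * M * x)
        = 2 * c * Real.cos (π * M * x + π * y₂) := by
      rw [show π * M * x + π * y₂ + π * M * x = (π * M * x + π * y₂) + π * M * x by ring,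
          Real.cos_add,
          show π * y₂ = (π * M * x + π * y₂) - π * M * x by ring,
          Real.cos_sub, ← hcdef]
      ring
    rw [eq_div_iff (ne_of_gt hp₂)]
    rw [← hp₂def] at h
    linarith [h, hnum]
  rw [hE₁, hE₂, hS₁, hS₂]
  have hsinM : Real.sin (π / M) = p₁ * Real.cos (π * y₂) - Real.cos (π * y₁) * p₂ := by
    rw [show π / (M:ℝ) = π * y₁ - π * y₂ by simp only [hy₁, hy₂, hs]; field_simp; ring,
        Real.sin_sub, hp₁def, hp₂def]
  have hfinal : (-(1 / (3 * π + 5)))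
        * ((3 * π / (2 * M)) * ((2 * c ^ 2 - 2 * M * p₁ ^ 2) / (4 * p₁ ^ 2)
            + (2 * c ^ 2 - 2 * M * p₂ ^ 2) / (4 * p₂ ^ 2))
          + (5 / 2) * (c * Real.cos (π * M * x + π * y₁) / p₁
            - c * Real.cos (π * M * x + π * y₂) / p₂))
      = 3 * π / (2 * (3 * π + 5))
        + c ^ 2 * ((10 * M * Real.sin (π / M) * p₁ * p₂ - 3 * π * (p₁ ^ 2 + p₂ ^ 2))
            / ((3 * π + 5) * (4 * M * p₁ ^ 2 * p₂ ^ 2))) := by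
    rw [hsinM, Real.cos_add (π * M * x) (π * y₁), Real.cos_add (π * M * x) (π * y₂), ← hcdef]
    field_simp
    ring
  rw [hfinal]
  clear hsummand hsplit hE₁ hE₂ hS₁ hS₂ hsinM hfinal hMy₁ hMy₂
  have hstar : 3 * π * (p₁ ^ 2 + p₂ ^ 2) ≤ 10 * M * Real.sin (π / M) * p₁ * p₂ := by
    set t : ℝ := π / (2 * M) with htdef
    have htpos : 0 < t := by positivity
    have htle : t ≤ π / 4 := by
      rw [htdef, div_le_div_iff₀ (by positivity) (by norm_num)]
      nlinarith [mul_le_mul_of_nonneg_left hMr hpi.le]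
    have h2t : π / (M:ℝ) = 2 * t := by rw [htdef]; field_simp
    have hy₁t : π * y₁ = π * x + t := by
      rw [htdef]; simp only [hy₁, hs]; field_simp
    have hy₂t : π * y₂ = π * x - t := by
      rw [htdef]; simp only [hy₂, hs]; field_simp
    have hpx : 2 * t ≤ π * x := by
      have : 2 * t = π * (1 / M) := by rw [htdef]; field_simp
      rw [this]
      exact mul_le_mul_of_nonneg_left hx1 hpi.le
    have hpxle : π * x ≤ π / 2 := by nlinarith
    set a : ℝ := Real.sin t with hadef
    set b : ℝ := Real.sin (3 * t) with hbdef
    have ha : 0 < a := Real.sin_pos_of_pos_of_lt_pi htpos (by nlinarith [Real.pi_gt_three])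
    have hb : 0 < b := Real.sin_pos_of_pos_of_lt_pi (by positivity)
      (by nlinarith [Real.pi_gt_three])
    have hpp : p₂ ≤ p₁ := by
      have h := Real.sin_sub_sin (π * y₁) (π * y₂)
      rw [← hp₁def, ← hp₂def,
          show (π * y₁ - π * y₂) / 2 = t by rw [hy₁t, hy₂t]; ring,
          show (π * y₁ + π * y₂) / 2 = π * x by rw [hy₁t, hy₂t]; ring, ← hadef] at h
      have hcx : 0 ≤ Real.cos (π * x) :=
        Real.cos_nonneg_of_mem_Icc ⟨by nlinarith, hpxle⟩
      linarith [h, mul_nonneg ha.le hcx]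
    have hab : a ≤ b := by
      have h := Real.sin_sub_sin (3 * t) t
      rw [show (3 * t - t) / 2 = t by ring, show (3 * t + t) / 2 = 2 * t by ring,
          ← hadef, ← hbdef] at h
      have hc2t : 0 ≤ Real.cos (2 * t) :=
        Real.cos_nonneg_of_mem_Icc ⟨by nlinarith, by nlinarith⟩
      linarith [h, mul_nonneg ha.le hc2t]
    have hap : a * p₁ ≤ b * p₂ := by
      have e1 : 2 * (a * p₁) = Real.cos (π * x) - Real.cos (π * x + 2 * t) := by
        have h' := two_sin_mul_sin t (π * y₁)
        rw [← hadef, ← hp₁def, hy₁t,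
            show π * x + t - t = π * x by ring,
            show π * x + t + t = π * x + 2 * t by ring] at h'
        linarith [h']
      have e2 : 2 * (b * p₂) = Real.cos (π * x - 4 * t) - Real.cos (π * x + 2 * t) := by
        have h' := two_sin_mul_sin (3 * t) (π * y₂)
        rw [← hbdef, ← hp₂def, hy₂t,
            show π * x - t - 3 * t = π * x - 4 * t by ring,
            show π * x - t + 3 * t = π * x + 2 * t by ring] at h'
        linarith [h']
      have e3 : Real.cos (π * x - 4 * t) - Real.cos (π * x)
          = 2 * Real.sin (π * x - 2 * t) * Real.sin (2 * t) := by
        rw [Real.cos_sub_cos,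
            show (π * x - 4 * t + π * x) / 2 = π * x - 2 * t by ring,
            show (π * x - 4 * t - π * x) / 2 = -(2 * t) by ring, Real.sin_neg]
        ring
      have h1 : 0 ≤ Real.sin (π * x - 2 * t) :=
        Real.sin_nonneg_of_nonneg_of_le_pi (by linarith) (by nlinarith)
      have h2 : 0 ≤ Real.sin (2 * t) :=
        Real.sin_nonneg_of_nonneg_of_le_pi (by positivity) (by nlinarith)
      linarith [e1, e2, e3, mul_nonneg h1 h2]
    have hbp : a * p₂ ≤ b * p₁ := mul_le_mul hab hpp hp₂.le hb.le
    have hA : a * b * (p₁ ^ 2 + p₂ ^ 2) ≤ (a ^ 2 + b ^ 2) * (p₁ * p₂) := by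
      have hprod := mul_nonneg (sub_nonneg.2 hap) (sub_nonneg.2 hbp)
      nlinarith [hprod]
    have hD := diamond M hM
    rw [← htdef, ← hadef, ← hbdef] at hD
    have h5 : 3 * t * (p₁ ^ 2 + p₂ ^ 2) ≤ 5 * Real.sin (2 * t) * (p₁ * p₂) := by
      have hab0 : 0 < a * b := mul_pos ha hb
      have c1 : 3 * t * (p₁ ^ 2 + p₂ ^ 2) * (a * b) ≤ 5 * Real.sin (2 * t) * (p₁ * p₂) * (a * b) := by
        have s1 : 3 * t * (a * b * (p₁ ^ 2 + p₂ ^ 2)) ≤ 3 * t * ((a ^ 2 + b ^ 2) * (p₁ * p₂)) :=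
          mul_le_mul_of_nonneg_left hA (by positivity)
        have s2 : (3 * t * (a ^ 2 + b ^ 2)) * (p₁ * p₂)
            ≤ (5 * Real.sin (2 * t) * (a * b)) * (p₁ * p₂) :=
          mul_le_mul_of_nonneg_right hD (by positivity)
        linarith [s1, s2]
      exact le_of_mul_le_mul_right c1 hab0
    have h6 := mul_le_mul_of_nonneg_left h5 (by positivity : (0:ℝ) ≤ 2 * (M:ℝ))
    have hpi2M : π = 2 * M * t := by rw [htdef]; field_simp
    rw [h2t, hpi2M]
    linarith [h6]
  have hnn : 0 ≤ c ^ 2 * ((10 * M * Real.sin (π / M) * p₁ * p₂ - 3 * π * (p₁ ^ 2 + p₂ ^ 2))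
      / ((3 * π + 5) * (4 * M * p₁ ^ 2 * p₂ ^ 2))) := by
    apply mul_nonneg (sq_nonneg c)
    apply div_nonneg (by linarith [hstar]) (by positivity)
  linarith [hnn]

theorem montgomery_large_values
    (M N : ℕ) (hM : 0 < M) (hN : 0 < N) (x : ℕ → ℝ)
    (h : ∀ n, 1 ≤ n → n ≤ N → 1 / (M : ℝ) ≤ nearestIntDist (x n)) :
    (N : ℝ) / 6 <
      ∑ m ∈ Finset.Icc 1 M, ‖∑ n ∈ Finset.Icc 1 N, eExp (m * x n)‖ := by
  have hpi : (0:ℝ) < π := Real.pi_pos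
  have hden : (0:ℝ) < 3 * π + 5 := by positivity
  have hM2 : 2 ≤ M := by
    by_contra hc
    push_neg at hc
    interval_cases M
    have h1 := h 1 le_rfl hN
    have h2 := abs_sub_round (x 1)
    simp only [nearestIntDist, Nat.cast_one] at h1
    norm_num at h1
    linarith
  have hM0 : (0:ℝ) < M := by exact_mod_cast hM
  set B : ℕ → ℝ := fun m =>
    -(3 * π * (1 - (m : ℝ) / M) * Real.cos (π * m / M) + 5 * Real.sin (π * m / M)) / (3 * π + 5)
    with hBdef
  have hBle : ∀ m ∈ Icc 1 M, |B m| ≤ 1 := by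
    intro m hm
    simp only [mem_Icc] at hm
    have hmM : (m:ℝ) ≤ M := by exact_mod_cast hm.2
    have hm0 : (0:ℝ) ≤ m := by positivity
    have hfr0 : 0 ≤ 1 - (m:ℝ)/M := by
      rw [sub_nonneg, div_le_one hM0]; exact hmM
    have hfr1 : 1 - (m:ℝ)/M ≤ 1 := by
      have : 0 ≤ (m:ℝ)/M := by positivity
      linarith
    have h1 : |Real.cos (π * m / M)| ≤ 1 := Real.abs_cos_le_one _
    have h2 : |Real.sin (π * m / M)| ≤ 1 := Real.abs_sin_le_one _
    simp only [hBdef]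
    rw [abs_div, abs_of_pos hden, div_le_one hden, abs_neg]
    have hA : |3 * π * (1 - (m : ℝ) / M) * Real.cos (π * m / M)| ≤ 3 * π * (1 - (m:ℝ)/M) := by
      rw [abs_mul, abs_of_nonneg (mul_nonneg (by positivity : (0:ℝ) ≤ 3 * π) hfr0)]
      exact mul_le_of_le_one_right (mul_nonneg (by positivity) hfr0) h1
    have hB5 : |5 * Real.sin (π * m / M)| ≤ 5 := by
      rw [abs_mul, abs_of_nonneg (by norm_num : (0:ℝ) ≤ (5:ℝ))]
      linarith [h2]
    have hC : 3 * π * (1 - (m : ℝ) / M) ≤ 3 * π := by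
      nlinarith [mul_le_mul_of_nonneg_left hfr1 (le_of_lt (by positivity : (0:ℝ) < 3 * π))]
    calc |3 * π * (1 - (m : ℝ) / M) * Real.cos (π * m / M) + 5 * Real.sin (π * m / M)|
        ≤ |3 * π * (1 - (m : ℝ) / M) * Real.cos (π * m / M)| + |5 * Real.sin (π * m / M)| :=
          abs_add_le _ _
      _ ≤ 3 * π + 5 := by linarith [hA, hB5, hC]
  have heRe : ∀ (y:ℝ), (eExp y).re = Real.cos (2 * π * y) := by
    intro y
    rw [show eExp y = Complex.exp (((2 * π * y : ℝ) : ℂ) * Complex.I) by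
      unfold eExp; congr 1; push_cast; ring]
    exact Complex.exp_ofReal_mul_I_re _
  have hQ : ∀ n ∈ Icc 1 N,
      3 * π / (2 * (3 * π + 5)) ≤ ∑ m ∈ Icc 1 M, B m * Real.cos (2 * π * m * (x n)) := by
    intro n hn
    simp only [mem_Icc] at hn
    set r : ℝ := x n - round (x n) with hrdef
    have hcosmn : ∀ m : ℕ, Real.cos (2 * π * m * (x n)) = Real.cos (2 * π * m * |r|) := by
      intro m
      have h1 : 2 * π * m * (x n) = 2 * π * m * r + ((m * round (x n) : ℤ) : ℝ) * (2 * π) := by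
        rw [hrdef]; push_cast; ring
      rw [h1, Real.cos_add_int_mul_two_pi]
      rcases abs_cases r with ⟨he, _⟩ | ⟨he, _⟩
      · rw [he]
      · rw [he, show 2 * π * m * (-r) = -(2 * π * m * r) by ring, Real.cos_neg]
    have hub : |r| ≤ 1/2 := abs_sub_round (x n)
    have hlb : 1/(M:ℝ) ≤ |r| := h n hn.1 hn.2
    have hkey := key_ineq M hM2 |r| hlb hub
    calc 3 * π / (2 * (3 * π + 5))
        ≤ ∑ m ∈ Icc 1 M, B m * Real.cos (2 * π * m * |r|) := hkey
      _ = ∑ m ∈ Icc 1 M, B m * Real.cos (2 * π * m * (x n)) := by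
          refine Finset.sum_congr rfl fun m _ => ?_
          rw [hcosmn m]
  have hlower : (N:ℝ) * (3 * π / (2 * (3 * π + 5)))
      ≤ ∑ m ∈ Icc 1 M, ∑ n ∈ Icc 1 N, B m * Real.cos (2 * π * m * (x n)) := by
    rw [Finset.sum_comm]
    calc (N:ℝ) * (3 * π / (2 * (3 * π + 5)))
        = ∑ _n ∈ Icc 1 N, 3 * π / (2 * (3 * π + 5)) := by
          rw [Finset.sum_const, Nat.card_Icc]
          simp only [Nat.add_sub_cancel, nsmul_eq_mul]
      _ ≤ ∑ n ∈ Icc 1 N, ∑ m ∈ Icc 1 M, B m * Real.cos (2 * π * m * (x n)) :=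
          Finset.sum_le_sum hQ
  have hupper : ∀ m ∈ Icc 1 M,
      ∑ n ∈ Icc 1 N, B m * Real.cos (2 * π * m * (x n))
        ≤ ‖∑ n ∈ Icc 1 N, eExp (m * x n)‖ := by
    intro m hm
    have hre : (∑ n ∈ Icc 1 N, eExp (↑m * x n)).re
        = ∑ n ∈ Icc 1 N, Real.cos (2 * π * m * (x n)) := by
      rw [Complex.re_sum]
      refine Finset.sum_congr rfl fun n _ => ?_
      rw [heRe (↑m * x n)]
      congr 1
      ring
    calc ∑ n ∈ Icc 1 N, B m * Real.cos (2 * π * m * (x n))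
        = B m * ∑ n ∈ Icc 1 N, Real.cos (2 * π * m * (x n)) := by rw [Finset.mul_sum]
      _ ≤ |B m * ∑ n ∈ Icc 1 N, Real.cos (2 * π * m * (x n))| := le_abs_self _
      _ = |B m| * |∑ n ∈ Icc 1 N, Real.cos (2 * π * m * (x n))| := abs_mul _ _
      _ ≤ 1 * |∑ n ∈ Icc 1 N, Real.cos (2 * π * m * (x n))| :=
          mul_le_mul_of_nonneg_right (hBle m hm) (abs_nonneg _)
      _ = |(∑ n ∈ Icc 1 N, eExp (↑m * x n)).re| := by rw [one_mul, hre]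
      _ ≤ ‖∑ n ∈ Icc 1 N, eExp (↑m * x n)‖ := Complex.abs_re_le_norm _
  have htotal : (N:ℝ) * (3 * π / (2 * (3 * π + 5)))
      ≤ ∑ m ∈ Finset.Icc 1 M, ‖∑ n ∈ Finset.Icc 1 N, eExp (m * x n)‖ :=
    le_trans hlower (Finset.sum_le_sum hupper)
  have hNpos : (0:ℝ) < N := by exact_mod_cast hN
  have hconst : (1:ℝ)/6 < 3 * π / (2 * (3 * π + 5)) := by
    rw [div_lt_div_iff₀ (by norm_num) (by positivity)]
    nlinarith [Real.pi_gt_three]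
  calc (N : ℝ) / 6 = (N:ℝ) * (1/6) := by ring
    _ < (N:ℝ) * (3 * π / (2 * (3 * π + 5))) := by
        exact mul_lt_mul_of_pos_left hconst hNpos
    _ ≤ _ := htotal

end
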